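/- arXiv:2406.15525 — 3 statements merged into one kernel-verified Lean document; each statement's English description precedes it below -/
import Mathlib

section
/- Let A = [[1,1],[0,1]] and B = [[1,0],[1,1]] in SL(2,ℤ). Then for every pair (n,p) of coprime positive integers, there exist a unique N > 0 and unique sequences of natural numbers (α₁,…,α_N) and (β₁,…,β_N) with α_i > 0 for i ≥ 2, β_i > 0 for i ≤ N−1 (α₁ and β_N may be zero), such that the vector (n,p) equals B^{β_N} A^{α_N} ⋯ B^{β₁} A^{α₁} applied to the vector (1,1). -/
/-
The Euclidean algorithm read backwards. On positive vectors `A (x, y) = (x + y, y)` and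
`B (x, y) = (x, x + y)`, so the leftmost letter of a normal form of `(x, y)` is forced: it is `B`
(`β_N > 0`) when `x < y`, and `A` (`β_N = 0 < α_N`) when `y < x`. Removing it is a bijection onto
the normal forms of `(x, y - x)`, resp. `(x - y, y)`, inverse to putting it back; when `α_N` drops
to `0` the block is discarded, unambiguously because the interior exponents are positive.
Induction on `x + y` reduces everything to `(1, 1)`, whose only normal form is `N = 1`,
`α₁ = β₁ = 0`, and coprimality is what makes the subtractive Euclidean algorithm end there.
-/

open Matrix

def A : Matrix (Fin 2) (Fin 2) ℤ := !![1, 1; 0, 1]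
def B : Matrix (Fin 2) (Fin 2) ℤ := !![1, 0; 1, 1]

/-- The product `B^{β_N} A^{α_N} ⋯ B^{β₁} A^{α₁}`, where index `i : Fin N`
corresponds to `(α_{i+1}, β_{i+1})`. -/
def W (N : ℕ) (α β : Fin N → ℕ) : Matrix (Fin 2) (Fin 2) ℤ :=
  ((List.finRange N).reverse.map (fun i => B ^ β i * A ^ α i)).prod

lemma existsUnique_of_leftInvOn {X Y : Type*} {P : X → Prop} {Q : Y → Prop} (f : X → Y)
    (g : Y → X) (hQ : ∃! y, Q y) (hf : ∀ x, P x → Q (f x)) (hg : ∀ y, Q y → P (g y))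
    (hgf : ∀ x, P x → g (f x) = x) : ∃! x, P x := by
  obtain ⟨y, hy, hy_unique⟩ := hQ
  exact ⟨g y, hg y hy, fun x hx => by rw [← hgf x hx, hy_unique (f x) (hf x hx)]⟩

lemma A_pow_mulVec (a : ℕ) (v : Fin 2 → ℤ) : A ^ a *ᵥ v = ![v 0 + a * v 1, v 1] := by
  induction a with
  | zero => ext i; fin_cases i <;> simp
  | succ a ih =>
    rw [pow_succ', ← mulVec_mulVec, ih]
    ext i; fin_cases i <;> simp [A, mulVec, dotProduct, Fin.sum_univ_two, add_mul, add_assoc]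

lemma B_pow_mulVec (b : ℕ) (v : Fin 2 → ℤ) : B ^ b *ᵥ v = ![v 0, b * v 0 + v 1] := by
  induction b with
  | zero => ext i; fin_cases i <;> simp
  | succ b ih =>
    rw [pow_succ', ← mulVec_mulVec, ih]
    ext i; fin_cases i <;> simp [B, mulVec, dotProduct, Fin.sum_univ_two]
    ring

lemma A_mulVec_eq_iff (w : Fin 2 → ℤ) (x y : ℤ) : A *ᵥ w = ![x, y] ↔ w = ![x - y, y] := by
  rw [← pow_one A, A_pow_mulVec]
  simp only [funext_iff, Fin.forall_fin_two]
  simp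
  omega

lemma B_mulVec_eq_iff (w : Fin 2 → ℤ) (x y : ℤ) : B *ᵥ w = ![x, y] ↔ w = ![x, y - x] := by
  rw [← pow_one B, B_pow_mulVec]
  simp only [funext_iff, Fin.forall_fin_two]
  simp
  omega

@[simp]
lemma W_zero (α β : Fin 0 → ℕ) : W 0 α β = 1 := rfl

lemma W_snoc (M : ℕ) (α β : Fin M → ℕ) (a b : ℕ) :
    W (M + 1) (Fin.snoc α a) (Fin.snoc β b) = B ^ b * A ^ a * W M α β := by
  simp [W, List.finRange_succ_last, List.map_reverse, Function.comp_def, mul_assoc]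

structure Blocks where
  N : ℕ
  α : Fin N → ℕ
  β : Fin N → ℕ

namespace Blocks

variable {M : ℕ} {α β : Fin M → ℕ} {a b : ℕ} {x y : ℤ}

def equivSigma : Blocks ≃ Σ N : ℕ, (Fin N → ℕ) × (Fin N → ℕ) where
  toFun q := ⟨q.N, q.α, q.β⟩
  invFun q := ⟨q.1, q.2.1, q.2.2⟩

def IsNormal (q : Blocks) : Prop :=
  0 < q.N ∧ (∀ i : Fin q.N, 1 ≤ (i : ℕ) → 0 < q.α i) ∧ ∀ i : Fin q.N, (i : ℕ) < q.N - 1 → 0 < q.β i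

def vec (q : Blocks) : Fin 2 → ℤ := W q.N q.α q.β *ᵥ ![1, 1]

def IsNormalFormOf (q : Blocks) (v : Fin 2 → ℤ) : Prop := q.IsNormal ∧ q.vec = v

lemma exists_eq_snoc (q : Blocks) (hq : 0 < q.N) :
    ∃ (M : ℕ) (α β : Fin M → ℕ) (a b : ℕ), q = ⟨M + 1, Fin.snoc α a, Fin.snoc β b⟩ := by
  obtain ⟨_ | M, α, β⟩ := q
  · exact absurd hq (lt_irrefl 0)
  · exact ⟨M, Fin.init α, Fin.init β, α (Fin.last M), β (Fin.last M), by simp⟩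

lemma vec_zero (α β : Fin 0 → ℕ) : (⟨0, α, β⟩ : Blocks).vec = ![1, 1] := by
  simp [vec]

lemma vec_snoc : (⟨M + 1, Fin.snoc α a, Fin.snoc β b⟩ : Blocks).vec =
    B ^ b *ᵥ A ^ a *ᵥ (⟨M, α, β⟩ : Blocks).vec := by
  rw [vec, vec, W_snoc, ← mulVec_mulVec, ← mulVec_mulVec]

lemma vec_pos (q : Blocks) : 0 < q.vec 0 ∧ 0 < q.vec 1 := by
  obtain ⟨M, α, β⟩ := q
  induction M with
  | zero => simp [vec_zero]
  | succ M ih =>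
    cases α using Fin.snocCases with | snoc α a =>
    cases β using Fin.snocCases with | snoc β b =>
    obtain ⟨hx, hy⟩ := ih α β
    rw [vec_snoc, A_pow_mulVec, B_pow_mulVec]
    simp only [cons_val_zero, cons_val_one, cons_val_fin_one]
    constructor <;> positivity

lemma isNormal_snoc_iff :
    (⟨M + 1, Fin.snoc α a, Fin.snoc β b⟩ : Blocks).IsNormal ↔
      (∀ i : Fin M, 1 ≤ (i : ℕ) → 0 < α i) ∧ (0 < M → 0 < a) ∧ ∀ i, 0 < β i := by
  simp only [IsNormal, Fin.forall_fin_succ', Fin.val_castSucc, Fin.snoc_castSucc, Fin.snoc_last,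
    Fin.val_last, add_tsub_cancel_right, Fin.is_lt, lt_self_iff_false, Nat.lt_add_one_iff, zero_le,
    true_and, forall_const, false_imp_iff, and_true, and_assoc]
  rfl

lemma isNormal_snoc_succ_iff {α β : Fin (M + 1) → ℕ} :
    (⟨M + 2, Fin.snoc α a, Fin.snoc β b⟩ : Blocks).IsNormal ↔
      (⟨M + 1, α, β⟩ : Blocks).IsNormal ∧ 0 < a ∧ 0 < β (Fin.last M) := by
  cases α using Fin.snocCases with | snoc α a' =>
  cases β using Fin.snocCases with | snoc β b' =>
  simp only [isNormal_snoc_iff, Fin.forall_fin_succ', Fin.val_castSucc, Fin.snoc_castSucc,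
    Fin.snoc_last, Fin.val_last, Nat.zero_lt_succ, true_implies]
  tauto

def mulB : Blocks → Blocks
  | ⟨0, α, β⟩ => ⟨0, α, β⟩
  | ⟨M + 1, α, β⟩ => ⟨M + 1, α, Fin.snoc (Fin.init β) (β (Fin.last M) + 1)⟩

def stripB : Blocks → Blocks
  | ⟨0, α, β⟩ => ⟨0, α, β⟩
  | ⟨M + 1, α, β⟩ => ⟨M + 1, α, Fin.snoc (Fin.init β) (β (Fin.last M) - 1)⟩

def mulA : Blocks → Blocks
  | ⟨0, α, β⟩ => ⟨0, α, β⟩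
  | ⟨M + 1, α, β⟩ =>
    if β (Fin.last M) = 0 then ⟨M + 1, Fin.snoc (Fin.init α) (α (Fin.last M) + 1), β⟩
    else ⟨M + 2, Fin.snoc α 1, Fin.snoc β 0⟩

def stripA : Blocks → Blocks
  | ⟨0, α, β⟩ => ⟨0, α, β⟩
  | ⟨M + 1, α, β⟩ =>
    if 0 < M ∧ α (Fin.last M) = 1 then ⟨M, Fin.init α, Fin.init β⟩
    else ⟨M + 1, Fin.snoc (Fin.init α) (α (Fin.last M) - 1), β⟩

@[simp]
lemma mulB_snoc :
    mulB ⟨M + 1, Fin.snoc α a, Fin.snoc β b⟩ = ⟨M + 1, Fin.snoc α a, Fin.snoc β (b + 1)⟩ := by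
  simp [mulB]

@[simp]
lemma stripB_snoc :
    stripB ⟨M + 1, Fin.snoc α a, Fin.snoc β b⟩ = ⟨M + 1, Fin.snoc α a, Fin.snoc β (b - 1)⟩ := by
  simp [stripB]

lemma mulA_snoc : mulA ⟨M + 1, Fin.snoc α a, Fin.snoc β b⟩ =
    if b = 0 then ⟨M + 1, Fin.snoc α (a + 1), Fin.snoc β b⟩
    else ⟨M + 2, Fin.snoc (Fin.snoc α a) 1, Fin.snoc (Fin.snoc β b) 0⟩ := by
  simp [mulA]

lemma stripA_snoc : stripA ⟨M + 1, Fin.snoc α a, Fin.snoc β b⟩ =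
    if 0 < M ∧ a = 1 then ⟨M, α, β⟩ else ⟨M + 1, Fin.snoc α (a - 1), Fin.snoc β b⟩ := by
  simp [stripA]

lemma vec_mulB (q : Blocks) (hq : 0 < q.N) : q.mulB.vec = B *ᵥ q.vec := by
  obtain ⟨M, α, β, a, b, rfl⟩ := q.exists_eq_snoc hq
  rw [mulB_snoc, vec_snoc, vec_snoc, pow_succ', ← mulVec_mulVec]

lemma vec_mulA (q : Blocks) (hq : 0 < q.N) : q.mulA.vec = A *ᵥ q.vec := by
  obtain ⟨M, α, β, a, b, rfl⟩ := q.exists_eq_snoc hq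
  rw [mulA_snoc]
  split_ifs with hb
  · rw [hb, vec_snoc, vec_snoc, pow_succ', ← mulVec_mulVec, pow_zero, one_mulVec, one_mulVec]
  · rw [vec_snoc (M := M + 1)]
    simp

lemma IsNormal.mulB {q : Blocks} (hq : q.IsNormal) : q.mulB.IsNormal := by
  obtain ⟨M, α, β, a, b, rfl⟩ := q.exists_eq_snoc hq.1
  simpa [isNormal_snoc_iff] using hq

lemma IsNormal.stripB {q : Blocks} (hq : q.IsNormal) : q.stripB.IsNormal := by
  obtain ⟨M, α, β, a, b, rfl⟩ := q.exists_eq_snoc hq.1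
  simpa [isNormal_snoc_iff] using hq

lemma IsNormal.mulA {q : Blocks} (hq : q.IsNormal) : q.mulA.IsNormal := by
  obtain ⟨M, α, β, a, b, rfl⟩ := q.exists_eq_snoc hq.1
  rw [mulA_snoc]
  split_ifs with hb
  · rw [isNormal_snoc_iff] at hq ⊢
    exact ⟨hq.1, fun _ => a.succ_pos, hq.2.2⟩
  · rw [isNormal_snoc_succ_iff]
    simp [hq, Nat.pos_of_ne_zero hb]

lemma IsNormal.stripA {q : Blocks} (hq : q.IsNormal) : q.stripA.IsNormal := by
  obtain ⟨M, α, β, a, b, rfl⟩ := q.exists_eq_snoc hq.1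
  rw [stripA_snoc]
  split_ifs with h
  · obtain ⟨M, rfl⟩ := Nat.exists_eq_add_of_lt h.1
    cases α using Fin.snocCases with | snoc α a' =>
    cases β using Fin.snocCases with | snoc β b' =>
    rw [h.2, isNormal_snoc_succ_iff] at hq
    exact hq.1
  · rw [isNormal_snoc_iff] at hq ⊢
    exact ⟨hq.1, fun hM => by have := hq.2.1 hM; omega, hq.2.2⟩

lemma vec_snoc_eq_iff : (⟨M + 1, Fin.snoc α a, Fin.snoc β b⟩ : Blocks).vec = ![x, y] ↔
    (⟨M, α, β⟩ : Blocks).vec 0 + a * (⟨M, α, β⟩ : Blocks).vec 1 = x ∧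
      b * x + (⟨M, α, β⟩ : Blocks).vec 1 = y := by
  rw [vec_snoc, A_pow_mulVec, B_pow_mulVec]
  simp only [funext_iff, Fin.forall_fin_two, cons_val_zero, cons_val_one, cons_val_fin_one]
  exact and_congr_right fun hx => by rw [hx]

lemma mulA_stripA (hq : (⟨M + 1, Fin.snoc α a, Fin.snoc β 0⟩ : Blocks).IsNormal) (ha : 0 < a) :
    mulA (stripA ⟨M + 1, Fin.snoc α a, Fin.snoc β 0⟩) = ⟨M + 1, Fin.snoc α a, Fin.snoc β 0⟩ := by
  rw [stripA_snoc]
  split_ifs with h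
  · obtain ⟨hM, rfl⟩ := h
    obtain ⟨M, rfl⟩ := Nat.exists_eq_add_of_lt hM
    cases α using Fin.snocCases with | snoc α a' =>
    cases β using Fin.snocCases with | snoc β b' =>
    have hb' : 0 < b' := by simpa using (isNormal_snoc_succ_iff.mp hq).2.2
    simp [mulA_snoc, hb'.ne']
  · simp [mulA_snoc, Nat.sub_add_cancel ha]

lemma IsNormal.eq_zero_of_last_α_eq_zero
    (hq : (⟨M + 1, Fin.snoc α 0, Fin.snoc β b⟩ : Blocks).IsNormal) : M = 0 := by
  by_contra! hM
  exact (isNormal_snoc_iff.mp hq).2.1 (Nat.pos_of_ne_zero hM) |>.false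

lemma IsNormalFormOf.last_β_pos
    (hq : (⟨M + 1, Fin.snoc α a, Fin.snoc β b⟩ : Blocks).IsNormalFormOf ![x, y])
    (hxy : x < y) : 0 < b := by
  obtain ⟨hx, hy⟩ := vec_snoc_eq_iff.mp hq.2
  rw [Nat.pos_iff_ne_zero]
  rintro rfl
  rcases Nat.eq_zero_or_pos a with rfl | ha
  · obtain rfl := hq.1.eq_zero_of_last_α_eq_zero
    simp [vec_zero] at hx hy
    omega
  · obtain ⟨hu, hv⟩ := vec_pos ⟨M, α, β⟩
    have : (1 : ℤ) ≤ a := by exact_mod_cast ha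
    rw [Nat.cast_zero, zero_mul, zero_add] at hy
    nlinarith

lemma IsNormalFormOf.last_β_eq_zero
    (hq : (⟨M + 1, Fin.snoc α a, Fin.snoc β b⟩ : Blocks).IsNormalFormOf ![x, y])
    (hyx : y < x) : b = 0 := by
  obtain ⟨hu, hv⟩ := vec_pos ⟨M, α, β⟩
  obtain ⟨hx, hy⟩ := vec_snoc_eq_iff.mp hq.2
  have : (0 : ℤ) ≤ a * (⟨M, α, β⟩ : Blocks).vec 1 := by positivity
  by_contra! hb
  have : (1 : ℤ) ≤ b := by exact_mod_cast Nat.one_le_iff_ne_zero.mpr hb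
  nlinarith

lemma IsNormalFormOf.last_α_pos
    (hq : (⟨M + 1, Fin.snoc α a, Fin.snoc β b⟩ : Blocks).IsNormalFormOf ![x, y])
    (hyx : y < x) : 0 < a := by
  obtain ⟨hx, hy⟩ := vec_snoc_eq_iff.mp hq.2
  rw [Nat.pos_iff_ne_zero]
  rintro rfl
  obtain rfl := hq.1.eq_zero_of_last_α_eq_zero
  rw [hq.last_β_eq_zero hyx] at hy
  simp [vec_zero] at hx hy
  omega

lemma IsNormalFormOf.eq_of_one_one
    (hq : (⟨M + 1, Fin.snoc α a, Fin.snoc β b⟩ : Blocks).IsNormalFormOf ![1, 1]) :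
    M = 0 ∧ a = 0 ∧ b = 0 := by
  obtain ⟨hu, hv⟩ := vec_pos ⟨M, α, β⟩
  obtain ⟨hx, hy⟩ := vec_snoc_eq_iff.mp hq.2
  obtain rfl : a = 0 := by
    by_contra! ha
    have : (1 : ℤ) ≤ a := by exact_mod_cast Nat.one_le_iff_ne_zero.mpr ha
    nlinarith
  obtain rfl : b = 0 := by
    by_contra! hb
    have : (1 : ℤ) ≤ b := by exact_mod_cast Nat.one_le_iff_ne_zero.mpr hb
    nlinarith
  exact ⟨hq.1.eq_zero_of_last_α_eq_zero, rfl, rfl⟩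

lemma existsUnique_one_one : ∃! q : Blocks, q.IsNormalFormOf ![1, 1] := by
  refine ⟨⟨1, Fin.snoc Fin.elim0 0, Fin.snoc Fin.elim0 0⟩, ⟨?_, ?_⟩, fun q hq => ?_⟩
  · simp [isNormal_snoc_iff]
  · simp [vec_snoc, vec_zero]
  · obtain ⟨M, α, β, a, b, rfl⟩ := q.exists_eq_snoc hq.1.1
    obtain ⟨rfl, rfl, rfl⟩ := hq.eq_of_one_one
    rw [Subsingleton.elim α Fin.elim0, Subsingleton.elim β Fin.elim0]

lemma existsUnique_of_lt (hxy : x < y) (h : ∃! q : Blocks, q.IsNormalFormOf ![x, y - x]) :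
    ∃! q : Blocks, q.IsNormalFormOf ![x, y] := by
  have hinv (q : Blocks) (hq : q.IsNormalFormOf ![x, y]) : q.stripB.mulB = q := by
    obtain ⟨M, α, β, a, b, rfl⟩ := q.exists_eq_snoc hq.1.1
    simp [Nat.sub_add_cancel (hq.last_β_pos hxy)]
  refine existsUnique_of_leftInvOn stripB mulB h (fun q hq => ⟨hq.1.stripB, ?_⟩)
    (fun q hq => ⟨hq.1.mulB, ?_⟩) hinv
  · rw [← B_mulVec_eq_iff, ← vec_mulB _ hq.1.stripB.1, hinv q hq, hq.2]
  · rw [vec_mulB _ hq.1.1, B_mulVec_eq_iff, hq.2]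

lemma existsUnique_of_gt (hyx : y < x) (h : ∃! q : Blocks, q.IsNormalFormOf ![x - y, y]) :
    ∃! q : Blocks, q.IsNormalFormOf ![x, y] := by
  have hinv (q : Blocks) (hq : q.IsNormalFormOf ![x, y]) : q.stripA.mulA = q := by
    obtain ⟨M, α, β, a, b, rfl⟩ := q.exists_eq_snoc hq.1.1
    obtain rfl := hq.last_β_eq_zero hyx
    exact mulA_stripA hq.1 (hq.last_α_pos hyx)
  refine existsUnique_of_leftInvOn stripA mulA h (fun q hq => ⟨hq.1.stripA, ?_⟩)
    (fun q hq => ⟨hq.1.mulA, ?_⟩) hinv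
  · rw [← A_mulVec_eq_iff, ← vec_mulA _ hq.1.stripA.1, hinv q hq, hq.2]
  · rw [vec_mulA _ hq.1.1, A_mulVec_eq_iff, hq.2]

theorem existsUnique_isNormalFormOf (n p : ℕ) (hn : 0 < n) (hp : 0 < p) (h : n.Coprime p) :
    ∃! q : Blocks, q.IsNormalFormOf ![n, p] := by
  rcases lt_trichotomy n p with hlt | rfl | hgt
  · have := existsUnique_isNormalFormOf n (p - n) hn (by omega)
      ((Nat.coprime_sub_self_right hlt.le).mpr h)
    rw [Nat.cast_sub hlt.le] at this
    exact existsUnique_of_lt (by exact_mod_cast hlt) this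
  · rw [(Nat.coprime_self n).mp h]
    exact_mod_cast existsUnique_one_one
  · have := existsUnique_isNormalFormOf (n - p) p (by omega) hp
      ((Nat.coprime_sub_self_left hgt.le).mpr h)
    rw [Nat.cast_sub hgt.le] at this
    exact existsUnique_of_gt (by exact_mod_cast hgt) this
termination_by n + p

end Blocks

theorem stmt0 (n p : ℕ) (hn : 0 < n) (hp : 0 < p) (h : Nat.Coprime n p) :
    ∃! q : Σ N : ℕ, (Fin N → ℕ) × (Fin N → ℕ),
      0 < q.1 ∧
      (∀ i : Fin q.1, 1 ≤ (i : ℕ) → 0 < q.2.1 i) ∧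
      (∀ i : Fin q.1, (i : ℕ) < q.1 - 1 → 0 < q.2.2 i) ∧
      (W q.1 q.2.1 q.2.2).mulVec ![1, 1] = ![(n : ℤ), (p : ℤ)] := by
  refine (Blocks.equivSigma.existsUnique_congr fun q => ?_).mp
    (Blocks.existsUnique_isNormalFormOf n p hn hp h)
  simp only [Blocks.IsNormalFormOf, Blocks.IsNormal, Blocks.vec, and_assoc]
  rfl
end

section
/- Let M = [[a,b],[c,d]] be a matrix in SL(2,ℤ) with all coefficients nonnegative and M ≠ identity. Then M can be written as a product of the matrices A = [[1,1],[0,1]] and B = [[1,0],[1,1]] (a nonempty word in A and B with nonnegative exponents). -/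
open Matrix

/-!
This is the Euclidean algorithm on the rows. A nonnegative matrix `!![a, b; c, d]` of
determinant one other than the identity has one row dominating the other entrywise, since
otherwise `ad - bc` would be negative or force the identity. Subtracting the smaller row from
the larger is left multiplication by `A⁻¹` or `B⁻¹`; it keeps the matrix nonnegative of
determinant one and strictly lowers the sum of the entries, so the descent ends at the identity.
-/

theorem A_mul_sub_lower (a b c d : ℤ) : A * !![a - c, b - d; c, d] = !![a, b; c, d] := by
  simp [A]

theorem B_mul_sub_upper (a b c d : ℤ) : B * !![a, b; c - a, d - b] = !![a, b; c, d] := by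
  simp [B]

theorem eq_one_or_row_le_row {a b c d : ℤ} (hdet : a * d - b * c = 1)
    (ha : 0 ≤ a) (hb : 0 ≤ b) (hc : 0 ≤ c) (hd : 0 ≤ d) :
    (a = 1 ∧ b = 0 ∧ c = 0 ∧ d = 1) ∨ (c ≤ a ∧ d ≤ b) ∨ (a ≤ c ∧ b ≤ d) := by
  rcases lt_trichotomy a c with hac | rfl | hca
  · rcases le_or_gt b d with hbd | hdb
    · exact .inr (.inr ⟨hac.le, hbd⟩)
    · nlinarith [mul_le_mul (Int.add_one_le_of_lt hac) (Int.add_one_le_of_lt hdb) (by omega) hc]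
  · rcases le_total d b with hdb | hbd
    · exact .inr (.inl ⟨le_rfl, hdb⟩)
    · exact .inr (.inr ⟨le_rfl, hbd⟩)
  · rcases le_or_gt d b with hdb | hbd
    · exact .inr (.inl ⟨hca.le, hdb⟩)
    · left
      have hbc := mul_le_mul (Int.add_one_le_of_lt hca) (Int.add_one_le_of_lt hbd) (by omega) ha
      obtain ⟨rfl, rfl⟩ : b = 0 ∧ c = 0 := by constructor <;> nlinarith
      have had : a * d = 1 := by linarith
      exact ⟨Int.eq_one_of_mul_eq_one_right ha had, rfl, rfl, Int.eq_one_of_mul_eq_one_left hd had⟩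

theorem mem_closure_A_B (a b c d : ℤ) (hdet : a * d - b * c = 1)
    (ha : 0 ≤ a) (hb : 0 ≤ b) (hc : 0 ≤ c) (hd : 0 ≤ d) :
    !![a, b; c, d] ∈ Submonoid.closure {A, B} := by
  rcases eq_one_or_row_le_row hdet ha hb hc hd with ⟨rfl, rfl, rfl, rfl⟩ | ⟨hca, hdb⟩ | ⟨hac, hbd⟩
  · exact one_fin_two (α := ℤ) ▸ one_mem _
  · have hcd : 0 < c + d := by
      by_contra!
      obtain ⟨rfl, rfl⟩ : c = 0 ∧ d = 0 := by omega
      simp at hdet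
    rw [← A_mul_sub_lower]
    exact mul_mem (Submonoid.subset_closure (by simp))
      (mem_closure_A_B (a - c) (b - d) c d (by linarith) (by linarith) (by linarith) hc hd)
  · have hab : 0 < a + b := by
      by_contra!
      obtain ⟨rfl, rfl⟩ : a = 0 ∧ b = 0 := by omega
      simp at hdet
    rw [← B_mul_sub_upper]
    exact mul_mem (Submonoid.subset_closure (by simp))
      (mem_closure_A_B a b (c - a) (d - b) (by linarith) ha hb (by linarith) (by linarith))
termination_by (a + b + c + d).toNat
decreasing_by all_goals omega

theorem stmt1 (M : Matrix (Fin 2) (Fin 2) ℤ) (hdet : M.det = 1)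
    (hpos : ∀ i j, 0 ≤ M i j) (hne : M ≠ 1) :
    ∃ l : List (Matrix (Fin 2) (Fin 2) ℤ),
      l ≠ [] ∧ (∀ X ∈ l, X = A ∨ X = B) ∧ l.prod = M := by
  rw [det_fin_two] at hdet
  have hM := mem_closure_A_B _ _ _ _ hdet (hpos 0 0) (hpos 0 1) (hpos 1 0) (hpos 1 1)
  rw [← eta_fin_two] at hM
  obtain ⟨l, hlAB, rfl⟩ := Submonoid.exists_list_of_mem_closure hM
  refine ⟨l, ?_, hlAB, rfl⟩
  rintro rfl
  exact hne List.prod_nil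
end

section
/- Define sequences by the extended Euclidean recursion: given positive integers q₀, q₁, define a_i and q_{i+2} by q_i = a_i q_{i+1} + q_{i+2} with q_{i+1} ≥ q_{i+2} > 0, stopping at the first index K with q_{K+1} = q_{K+2}; and define u₀ = u₁ = 1, u_{i+2} = a_i u_{i+1} + u_i. Then with d = gcd(q₀, q₁) one has (u_{K+3} + u_{K+2})·d = q₀ + q₁. -/
/-!
The quantity `u (i+1) * q i + u i * q (i+1)` is invariant along the recursion (the two
recursions are transposes of each other), and so is `gcd (q i) (q (i+1))`. At the stopping
index both `q (K+1)` and `q (K+2)` equal the gcd, and the padding `a (K+1) = 0` gives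
`u (K+3) = u (K+1)`, so the invariant evaluated there is `(u (K+3) + u (K+2)) * d`.
-/

theorem continuant_pairing_eq {R : Type*} [CommSemiring R] {q a u : ℕ → R} {n : ℕ}
    (hrec : ∀ i < n, q i = a i * q (i + 1) + q (i + 2))
    (hu : ∀ i, u (i + 2) = a i * u (i + 1) + u i) :
    u (n + 1) * q n + u n * q (n + 1) = u 1 * q 0 + u 0 * q 1 := by
  induction n with
  | zero => rfl
  | succ n ih =>
    rw [← ih fun i hi => hrec i (Nat.lt_succ_of_lt hi), hu n, hrec n n.lt_succ_self]
    ring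

theorem Nat.gcd_eq_of_euclidean_recursion {q a : ℕ → ℕ} {n : ℕ}
    (hrec : ∀ i < n, q i = a i * q (i + 1) + q (i + 2)) :
    Nat.gcd (q n) (q (n + 1)) = Nat.gcd (q 0) (q 1) := by
  induction n with
  | zero => rfl
  | succ n ih =>
    rw [← ih fun i hi => hrec i (Nat.lt_succ_of_lt hi), hrec n n.lt_succ_self,
      Nat.gcd_mul_right_add_left, Nat.gcd_comm]

theorem stmt13_general (K : ℕ) (q a u : ℕ → ℕ)
    (hrec : ∀ i ≤ K, q i = a i * q (i + 1) + q (i + 2))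
    (hstop : q (K + 1) = q (K + 2))
    (hpad : a (K + 1) = 0)
    (hu0 : u 0 = 1) (hu1 : u 1 = 1)
    (hu : ∀ i, u (i + 2) = a i * u (i + 1) + u i) :
    (u (K + 3) + u (K + 2)) * Nat.gcd (q 0) (q 1) = q 0 + q 1 := by
  have hrec' : ∀ i < K + 1, q i = a i * q (i + 1) + q (i + 2) :=
    fun i hi => hrec i (Nat.lt_succ_iff.mp hi)
  have hgcd : Nat.gcd (q 0) (q 1) = q (K + 1) := by
    rw [← Nat.gcd_eq_of_euclidean_recursion hrec', ← hstop, Nat.gcd_self]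
  have hlast : u (K + 3) = u (K + 1) := by
    simpa [hpad] using hu (K + 1)
  have hpair := continuant_pairing_eq hrec' hu
  rw [hu0, hu1] at hpair
  rw [hgcd, hlast]
  calc (u (K + 1) + u (K + 2)) * q (K + 1)
      = u (K + 1 + 1) * q (K + 1) + u (K + 1) * q (K + 1 + 1) := by rw [← hstop]; ring
    _ = q 0 + q 1 := by rw [hpair]; ring

/-- Extended Euclidean recursion: `q i = a i * q (i+1) + q (i+2)` with
`q (i+1) ≥ q (i+2) > 0`, stopping at the first index `K` with
`q (K+1) = q (K+2)`; the coefficient sequence is padded with `a (K+1) = 0`.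
With `u 0 = u 1 = 1` and `u (i+2) = a i * u (i+1) + u i`, one has
`(u (K+3) + u (K+2)) * gcd (q 0) (q 1) = q 0 + q 1`. -/
theorem stmt13 (K : ℕ) (q a u : ℕ → ℕ)
    (hq0 : 0 < q 0) (hq1 : 0 < q 1)
    (hrec : ∀ i ≤ K, q i = a i * q (i + 1) + q (i + 2))
    (hord : ∀ i ≤ K, 0 < q (i + 2) ∧ q (i + 2) ≤ q (i + 1))
    (hstop : q (K + 1) = q (K + 2))
    (hfirst : ∀ i < K, q (i + 1) ≠ q (i + 2))
    (hpad : a (K + 1) = 0)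
    (hu0 : u 0 = 1) (hu1 : u 1 = 1)
    (hu : ∀ i, u (i + 2) = a i * u (i + 1) + u i) :
    (u (K + 3) + u (K + 2)) * Nat.gcd (q 0) (q 1) = q 0 + q 1 :=
  stmt13_general K q a u hrec hstop hpad hu0 hu1 hu
end
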